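/- Under the edge consistency model, if every update function applied at a vertex v only reads and writes data on v and its incident edges (never modifying data on adjacent vertices), then any parallel execution in which no two adjacent vertices are updated simultaneously is sequentially consistent. -/

import Mathlib

/-- Data locations of a data graph: vertex data and edge data. -/
abbrev Loc (V : Type*) := V ⊕ Sym2 V

/-- The read scope of a vertex `v` under edge consistency: `v`, its neighbors,
and its incident edges. -/
def readScope {V : Type*} (G : SimpleGraph V) (v : V) : Set (Loc V) :=
  {l | match l with
    | Sum.inl u => u = v ∨ G.Adj u v
    | Sum.inr e => v ∈ e ∧ e ∈ G.edgeSet}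

/-- The write set of a vertex `v` under edge consistency: `v` itself and its
incident edges (data on adjacent vertices may not be modified). -/
def writeSet {V : Type*} (G : SimpleGraph V) (v : V) : Set (Loc V) :=
  {l | match l with
    | Sum.inl u => u = v
    | Sum.inr e => v ∈ e ∧ e ∈ G.edgeSet}

/-- One parallel step: all vertices of `S` are updated simultaneously; the state
changes on the write set of each updated vertex and is unchanged elsewhere. -/
def ParStep {V D : Type*} (G : SimpleGraph V) (f : V → (Loc V → D) → (Loc V → D))
    (S : Finset V) (σ σ' : Loc V → D) : Prop :=
  (∀ v ∈ S, ∀ l ∈ writeSet G v, σ' l = f v σ l) ∧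
  (∀ l, (∀ v ∈ S, l ∉ writeSet G v) → σ' l = σ l)

/-- A parallel execution under the edge consistency model: a sequence of parallel
steps, where the simultaneously updated vertices of each step are pairwise
non-adjacent (and distinct). -/
inductive ParExec {V D : Type*} (G : SimpleGraph V)
    (f : V → (Loc V → D) → (Loc V → D)) :
    List (Finset V) → (Loc V → D) → (Loc V → D) → Prop
  | nil (σ : Loc V → D) : ParExec G f [] σ σ
  | cons {S : Finset V} {steps : List (Finset V)} {σ σ₁ σ₂ : Loc V → D} :
      (∀ u ∈ S, ∀ v ∈ S, u ≠ v → ¬ G.Adj u v) →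
      ParStep G f S σ σ₁ → ParExec G f steps σ₁ σ₂ →
      ParExec G f (S :: steps) σ σ₂

/-!
Two vertices that are distinct and non-adjacent interfere with each other in no way: the write set of
one is disjoint from the read scope of the other, because the only shared data could be an edge
between them. So updating an independent set of vertices one after another, in any order, leaves
each location exactly as the simultaneous update does, and a parallel execution is replayed by
concatenating its steps in order.
-/

section EdgeConsistency

variable {V D : Type*} {G : SimpleGraph V} {f : V → (Loc V → D) → (Loc V → D)}

def ReadsWithinScope (G : SimpleGraph V) (f : V → (Loc V → D) → (Loc V → D)) : Prop :=
  ∀ v (σ σ' : Loc V → D), (∀ l ∈ readScope G v, σ l = σ' l) →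
    ∀ l ∈ writeSet G v, f v σ l = f v σ' l

def WritesWithinSet (G : SimpleGraph V) (f : V → (Loc V → D) → (Loc V → D)) : Prop :=
  ∀ v (σ : Loc V → D) (l : Loc V), l ∉ writeSet G v → f v σ l = σ l

theorem writeSet_subset_readScope (v : V) : writeSet G v ⊆ readScope G v := by
  rintro (w | e) hl
  · exact Or.inl hl
  · exact hl

theorem disjoint_writeSet_readScope {u v : V} (huv : Gᶜ.Adj u v) :
    Disjoint (writeSet G u) (readScope G v) := by
  obtain ⟨hne, hnadj⟩ := (G.compl_adj u v).mp huv
  rw [Set.disjoint_left]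
  rintro (w | e) hu hv
  · obtain rfl : w = u := hu
    exact hv.elim hne hnadj
  · have he : e = s(u, v) := (Sym2.mem_and_mem_iff hne).mp ⟨hu.1, hv.1⟩
    exact hnadj (G.mem_edgeSet.mp (he ▸ hv.2))

theorem disjoint_writeSet {u v : V} (huv : Gᶜ.Adj u v) :
    Disjoint (writeSet G u) (writeSet G v) :=
  (disjoint_writeSet_readScope huv).mono_right (writeSet_subset_readScope v)

theorem apply_apply_eq_of_compl_adj (hreads : ReadsWithinScope G f)
    (hwrites : WritesWithinSet G f) {u v : V} (huv : Gᶜ.Adj u v) (σ : Loc V → D) :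
    ∀ l ∈ writeSet G u, f u (f v σ) l = f u σ l :=
  hreads u _ _ fun _ hl =>
    hwrites v σ _ (Set.disjoint_right.mp (disjoint_writeSet_readScope huv.symm) hl)

theorem ParStep.eq {S : Finset V} {σ σ₁ σ₂ : Loc V → D}
    (h₁ : ParStep G f S σ σ₁) (h₂ : ParStep G f S σ σ₂) : σ₁ = σ₂ := by
  funext l
  by_cases hl : ∃ v ∈ S, l ∈ writeSet G v
  · obtain ⟨v, hv, hlv⟩ := hl
    rw [h₁.1 v hv l hlv, h₂.1 v hv l hlv]
  · push Not at hl
    rw [h₁.2 l hl, h₂.2 l hl]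

theorem parStep_foldl [DecidableEq V] (hreads : ReadsWithinScope G f)
    (hwrites : WritesWithinSet G f) {L : List V} (hL : L.Pairwise Gᶜ.Adj) (σ : Loc V → D) :
    ParStep G f L.toFinset σ (L.foldl (fun s v => f v s) σ) := by
  induction L generalizing σ with
  | nil => exact ⟨by simp, fun _ _ => rfl⟩
  | cons v L ih =>
    obtain ⟨hvL, hL⟩ := List.pairwise_cons.mp hL
    obtain ⟨hwrite, hkeep⟩ := ih hL (f v σ)
    simp only [List.toFinset_cons, List.foldl_cons]
    refine ⟨fun u hu l hl => ?_, fun l hl => ?_⟩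
    · rcases Finset.mem_insert.mp hu with rfl | hu
      · exact hkeep l fun w hw =>
          Set.disjoint_left.mp (disjoint_writeSet (hvL w (List.mem_toFinset.mp hw))) hl
      · rw [hwrite u hu l hl, apply_apply_eq_of_compl_adj hreads hwrites
          (hvL u (List.mem_toFinset.mp hu)).symm σ l hl]
    · rw [hkeep l fun w hw => hl w (Finset.mem_insert_of_mem hw),
        hwrites v σ l (hl v (Finset.mem_insert_self v _))]

theorem foldl_toList_eq_of_parStep (hreads : ReadsWithinScope G f)
    (hwrites : WritesWithinSet G f) {S : Finset V} (hS : G.IsIndepSet S)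
    {σ σ₁ : Loc V → D} (hstep : ParStep G f S σ σ₁) :
    S.toList.foldl (fun s v => f v s) σ = σ₁ := by
  classical
  have hL : S.toList.Pairwise Gᶜ.Adj := S.nodup_toList.pairwise_of_forall_ne
    fun u hu v hv hne => (G.compl_adj u v).mpr
      ⟨hne, hS (Finset.mem_toList.mp hu) (Finset.mem_toList.mp hv) hne⟩
  have hseq := parStep_foldl hreads hwrites hL σ
  rw [Finset.toList_toFinset] at hseq
  exact hseq.eq hstep

end EdgeConsistency

/-- Edge consistency implies sequential consistency: if every update function at
`v` reads only data of `v`, its incident edges and its neighbors, and writes only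
data of `v` and its incident edges (never modifying adjacent vertex data), then
any parallel execution in which no two adjacent vertices are updated
simultaneously has an equivalent sequential execution. -/
theorem edge_consistency_sequentially_consistent
    {V D : Type*} (G : SimpleGraph V) (f : V → (Loc V → D) → (Loc V → D))
    (hreads : ∀ v (σ σ' : Loc V → D), (∀ l ∈ readScope G v, σ l = σ' l) →
      ∀ l ∈ writeSet G v, f v σ l = f v σ' l)
    (hwrites : ∀ v (σ : Loc V → D) (l : Loc V), l ∉ writeSet G v → f v σ l = σ l)
    (steps : List (Finset V)) (σ σf : Loc V → D)
    (hexec : ParExec G f steps σ σf) :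
    ∃ L : List V, L.Perm (steps.flatMap Finset.toList) ∧
      L.foldl (fun s v => f v s) σ = σf := by
  induction hexec with
  | nil σ => exact ⟨[], List.Perm.refl _, rfl⟩
  | @cons S steps σ σ₁ σ₂ hS hstep _ ih =>
    obtain ⟨L, hperm, hfold⟩ := ih
    refine ⟨S.toList ++ L, hperm.append_left S.toList, ?_⟩
    rw [List.foldl_append, foldl_toList_eq_of_parStep hreads hwrites hS hstep, hfold]
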